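/- arXiv:1405.5601 — 2 statements merged into one kernel-verified Lean document; each statement's English description precedes it below -/
import Mathlib

section
/- There exist an NFA cover automaton A for a finite language L, states p, q of A with p ∼_A q and level(p) ≤ level(q), such that weakly merging q into p (collapsing q onto p, consolidating both incoming and outgoing transitions) does not yield a cover automaton for L. -/
/-- `A` is an NFA cover automaton for `L` with length bound `l`. -/
def IsCoverN {α σ : Type*} (A : NFA α σ) (L : Language α) (l : ℕ) : Prop :=
  ∀ w : List α, w.length ≤ l → (w ∈ A.accepts ↔ w ∈ L)

/-- The level of a state: the length of a shortest word reaching it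
(`⊤` if it is unreachable). -/
noncomputable def nfaLevel {α σ : Type*} (A : NFA α σ) (s : σ) : ℕ∞ :=
  ⨅ w ∈ {w : List α | s ∈ A.eval w}, (w.length : ℕ∞)

/-- Acceptance of a word starting from the single state `s`. -/
def AccFrom {α σ : Type*} (A : NFA α σ) (s : σ) (w : List α) : Prop :=
  ∃ f ∈ A.evalFrom {s} w, f ∈ A.accept

/-- Similarity of states `p ∼_A q` in a cover automaton with length bound `l`:
acceptance from `p` and from `q` agree on all words of length at most
`l - max(level(p), level(q))`. -/
def StateSim {α σ : Type*} (A : NFA α σ) (l : ℕ) (p q : σ) : Prop :=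
  ∀ w : List α,
    (w.length : ℕ∞) ≤ (l : ℕ∞) - max (nfaLevel A p) (nfaLevel A q) →
    (AccFrom A p w ↔ AccFrom A q w)

/-- Strong merge of state `q` into state `p`: transitions entering `q` are
redirected to `p`, and `q` (with its outgoing transitions) is deleted. -/
def strongMerge {α σ : Type*} (A : NFA α σ) (p q : σ) : NFA α {s : σ // s ≠ q} where
  step := fun s a => {t | (t : σ) ∈ A.step s.1 a ∨ ((t : σ) = p ∧ q ∈ A.step s.1 a)}
  start := {s | (s : σ) ∈ A.start ∨ ((s : σ) = p ∧ q ∈ A.start)}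
  accept := {s | (s : σ) ∈ A.accept}

/-- Weak merge of state `q` into state `p`: `q` is collapsed onto `p`,
consolidating both its incoming and its outgoing transitions. -/
def weakMerge {α σ : Type*} [DecidableEq σ] (A : NFA α σ) (p q : σ) :
    NFA α {s : σ // s ≠ q} where
  step := fun s a =>
    if (s : σ) = p then
      {t | (t : σ) ∈ A.step p a ∨ (t : σ) ∈ A.step q a ∨
        ((t : σ) = p ∧ (q ∈ A.step p a ∨ q ∈ A.step q a))}
    else
      {t | (t : σ) ∈ A.step s.1 a ∨ ((t : σ) = p ∧ q ∈ A.step s.1 a)}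
  start := {s | (s : σ) ∈ A.start ∨ ((s : σ) = p ∧ q ∈ A.start)}
  accept := {s | (s : σ) ∈ A.accept}

/-! In the witness below, states `5` (level 1) and `3` (level 3) are similar for `l = 4`: only
words of length at most `4 - 3 = 1` are compared, and from both states exactly `a` is accepted.
Weak merging, however, hands the self-loop of `3` and its edge to the final state `4` over to `5`,
so that `0 → 5 → 5 → 4` accepts `a³`: the similarity bound is too short to control the long words
that now run through `p` before reaching the former successors of `q`. -/

namespace NFA

variable {α σ : Type*}

section OfFinset

variable (δ : σ → α → Finset σ) (I F : Finset σ)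

/-- An NFA presented by finite sets of successors, start states and accepting states; its runs can
then be computed by `decide`. -/
def ofFinset : NFA α σ where
  step s a := δ s a
  start := I
  accept := F

variable [DecidableEq σ] in
def finsetEvalFrom (S : Finset σ) (w : List α) : Finset σ :=
  w.foldl (fun S a => S.biUnion (δ · a)) S

variable {δ I F}

theorem mem_ofFinset_step {s t : σ} {a : α} : t ∈ (ofFinset δ I F).step s a ↔ t ∈ δ s a :=
  Iff.rfl

variable [DecidableEq σ]

theorem ofFinset_evalFrom (S : Finset σ) (w : List α) :
    (ofFinset δ I F).evalFrom S w = finsetEvalFrom δ S w := by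
  induction w generalizing S with
  | nil => rfl
  | cons a w ih =>
    have hstep : (ofFinset δ I F).stepSet S a = ↑(S.biUnion (δ · a)) := by
      ext t
      simp [stepSet, ofFinset]
    rw [evalFrom_cons, hstep, ih]
    rfl

theorem mem_ofFinset_eval {s : σ} {w : List α} :
    s ∈ (ofFinset δ I F).eval w ↔ s ∈ finsetEvalFrom δ I w := by
  change s ∈ (ofFinset δ I F).evalFrom I w ↔ _
  rw [ofFinset_evalFrom]
  rfl

theorem mem_ofFinset_accepts {w : List α} :
    w ∈ (ofFinset δ I F).accepts ↔ ∃ f ∈ F, f ∈ finsetEvalFrom δ I w := by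
  simp only [accepts, mem_ofFinset_eval]
  rfl

theorem accFrom_ofFinset {s : σ} {w : List α} :
    AccFrom (ofFinset δ I F) s w ↔ ∃ f ∈ F, f ∈ finsetEvalFrom δ {s} w := by
  rw [AccFrom, ← Finset.coe_singleton, ofFinset_evalFrom]
  exact ⟨fun ⟨f, hf, hF⟩ => ⟨f, hF, hf⟩, fun ⟨f, hF, hf⟩ => ⟨f, hf, hF⟩⟩

end OfFinset

end NFA

section Level

variable {α σ : Type*} {M : NFA α σ} {s : σ}

theorem nfaLevel_le_of_mem_eval {w : List α} (h : s ∈ M.eval w) : nfaLevel M s ≤ w.length :=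
  iInf₂_le (f := fun w (_ : w ∈ {w : List α | s ∈ M.eval w}) => (w.length : ℕ∞)) w h

theorem le_nfaLevel_iff {n : ℕ∞} : n ≤ nfaLevel M s ↔ ∀ w, s ∈ M.eval w → n ≤ w.length :=
  le_iInf₂_iff

theorem StateSim.of_forall_length_le {l k : ℕ} {p q : σ}
    (hk : (l : ℕ∞) - max (nfaLevel M p) (nfaLevel M q) ≤ k)
    (h : ∀ w : List α, w.length ≤ k → (AccFrom M p w ↔ AccFrom M q w)) : StateSim M l p q :=
  fun w hw => h w (by exact_mod_cast hw.trans hk)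

end Level

section WeakMerge

variable {α σ : Type*} [DecidableEq σ] {A : NFA α σ} {p q : σ} {a : α}

theorem mem_weakMerge_start {s : {s : σ // s ≠ q}} (h : s.1 ∈ A.start) :
    s ∈ (weakMerge A p q).start :=
  Or.inl h

theorem mem_weakMerge_step_of_ne {s t : {s : σ // s ≠ q}} (hs : s.1 ≠ p) (h : t.1 ∈ A.step s a) :
    t ∈ (weakMerge A p q).step s a := by
  simp only [weakMerge, if_neg hs]
  exact Or.inl h

theorem mem_weakMerge_step_of_mem_step_right (hp : p ≠ q) {t : {s : σ // s ≠ q}}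
    (h : t.1 ∈ A.step q a) : t ∈ (weakMerge A p q).step ⟨p, hp⟩ a := by
  simp only [weakMerge, if_pos]
  exact Or.inr (Or.inl h)

theorem mem_weakMerge_step_self_of_loop_right (hp : p ≠ q) (h : q ∈ A.step q a) :
    ⟨p, hp⟩ ∈ (weakMerge A p q).step ⟨p, hp⟩ a := by
  simp only [weakMerge, if_pos]
  exact Or.inr (Or.inr ⟨rfl, Or.inr h⟩)

end WeakMerge

theorem List.eq_replicate_length_unit (w : List Unit) : w = List.replicate w.length () :=
  List.eq_replicate_length.2 fun _ _ => rfl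

abbrev witnessNFA : NFA Unit (Fin 7) :=
  NFA.ofFinset (fun s _ => ![{1, 5}, {2}, {3}, {3, 4}, ∅, {6}, ∅] s) {0} {4, 6}

abbrev witnessLang : Language Unit :=
  ({List.replicate 2 (), List.replicate 4 ()} : Set (List Unit))

theorem witnessNFA_isCover : IsCoverN witnessNFA witnessLang 4 := by
  intro w hw
  rw [w.eq_replicate_length_unit] at hw ⊢
  rw [List.length_replicate] at hw
  change _ ↔ _ ∈ ({_, _} : Set _)
  simp only [NFA.mem_ofFinset_accepts, Set.mem_insert_iff, Set.mem_singleton_iff,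
    List.replicate_left_inj]
  interval_cases w.length <;> decide

theorem witnessNFA_level_five : nfaLevel witnessNFA 5 ≤ 1 :=
  nfaLevel_le_of_mem_eval (w := [()]) (NFA.mem_ofFinset_eval.2 (by decide))

theorem witnessNFA_level_three : 3 ≤ nfaLevel witnessNFA 3 := by
  refine le_nfaLevel_iff.2 fun w hw => ?_
  rw [w.eq_replicate_length_unit, NFA.mem_ofFinset_eval] at hw
  by_contra! hlt
  have : w.length < 3 := by exact_mod_cast hlt
  interval_cases w.length <;> exact absurd hw (by decide)

theorem witnessNFA_stateSim : StateSim witnessNFA 4 5 3 := by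
  refine StateSim.of_forall_length_le (k := 1) ?_ fun w hw => ?_
  · calc ((4 : ℕ) : ℕ∞) - max (nfaLevel witnessNFA 5) (nfaLevel witnessNFA 3)
        ≤ 4 - 3 := tsub_le_tsub_left (le_max_of_le_right witnessNFA_level_three) _
      _ = 1 := rfl
  · rw [w.eq_replicate_length_unit, NFA.accFrom_ofFinset, NFA.accFrom_ofFinset]
    interval_cases w.length <;> decide

theorem replicate_three_mem_weakMerge_witnessNFA :
    List.replicate 3 () ∈ (weakMerge witnessNFA 5 3).accepts := by
  refine NFA.accepts_iff_exists_path.2 ⟨⟨0, by decide⟩,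
    mem_weakMerge_start (Finset.mem_coe.2 (by decide)), ⟨4, by decide⟩,
    show (4 : Fin 7) ∈ ({4, 6} : Finset _) by decide, ⟨?_⟩⟩
  refine .cons ⟨5, by decide⟩ _ _ _ _ ?_ <| .cons ⟨5, by decide⟩ _ _ _ _ ?_ <|
    .cons ⟨4, by decide⟩ _ _ _ _ ?_ (.nil _)
  · exact mem_weakMerge_step_of_ne (by decide) (NFA.mem_ofFinset_step.2 (by decide))
  · exact mem_weakMerge_step_self_of_loop_right (by decide) (NFA.mem_ofFinset_step.2 (by decide))
  · exact mem_weakMerge_step_of_mem_step_right (by decide) (NFA.mem_ofFinset_step.2 (by decide))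

/-- there exist an NFA cover automaton `A` for a finite language `L`
and similar states `p ∼_A q` with `level(p) ≤ level(q)` such that weakly merging
`q` into `p` does not yield a cover automaton for `L`.
(Witness: `Σ = {a}`, `L = {a², a⁴}`, `l = 4`, the 7-state NFA of Figure 7.) -/
theorem weakMerge_can_fail :
    ∃ (A : NFA Unit (Fin 7)) (L : Language Unit) (l : ℕ) (p q : Fin 7),
      Set.Finite (L : Set (List Unit)) ∧ (∀ w ∈ L, List.length w ≤ l) ∧
      IsCoverN A L l ∧ p ≠ q ∧ StateSim A l p q ∧
      nfaLevel A p ≤ nfaLevel A q ∧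
      ¬ IsCoverN (weakMerge A p q) L l := by
  have hlevel : nfaLevel witnessNFA 5 ≤ nfaLevel witnessNFA 3 :=
    witnessNFA_level_five.trans (le_trans (by norm_num) witnessNFA_level_three)
  refine ⟨witnessNFA, witnessLang, 4, 5, 3, Set.toFinite _, ?_, witnessNFA_isCover, by decide,
    witnessNFA_stateSim, hlevel, fun hcover => ?_⟩
  · rintro w (rfl | rfl) <;> simp
  · have hmem := (hcover _ (by simp)).1 replicate_three_mem_weakMerge_witnessNFA
    rcases hmem with h | h <;> simpa using congrArg List.length h
end

section
/- For natural numbers m, n with m ≥ 1, n ≥ 2, the minimal NFA for L = {a,b}^{≤m} a {a,b}^{n-2} has exactly m+n states: the (m+n)-state NFA of the paper accepts L, and the extended fooling set S = {(b^m a b^j, b^{n-2-j}) : 0 ≤ j ≤ n-2} ∪ {(a^i, b^{m-i} a b^{n-2}) : 0 ≤ i ≤ m} certifies nsc(L) ≥ m+n. -/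
/-- The language `{a,b}^{≤m} a {a,b}^{n-2}` over `Bool` (`true` = a, `false` = b). -/
def Lmn (m n : ℕ) : Language Bool :=
  {w | ∃ u v : List Bool, w = u ++ [true] ++ v ∧ u.length ≤ m ∧ v.length = n - 2}

/-- The `(m+n)`-state NFA of Figure 1 for `Lmn m n`: states `0, …, m` form a chain
on both letters (counting a prefix of length at most `m`), each of them moves to
state `m+1` on `a`, and states `m+1, …, m+n-1` form a chain on both letters;
the unique final state is `m+n-1`. -/
def nfaFig1 (m n : ℕ) : NFA Bool (Fin (m + n)) where
  step := fun i c => {j | ((i : ℕ) < m ∧ (j : ℕ) = (i : ℕ) + 1) ∨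
    ((i : ℕ) ≤ m ∧ (j : ℕ) = m + 1 ∧ c = true) ∨
    (m + 1 ≤ (i : ℕ) ∧ (i : ℕ) < m + n - 1 ∧ (j : ℕ) = (i : ℕ) + 1)}
  start := {j | (j : ℕ) = 0}
  accept := {j | (j : ℕ) = m + n - 1}

/-- Left components of the extended fooling set:
`b^m a b^j` for `0 ≤ j ≤ n-2`, and `a^i` for `0 ≤ i ≤ m`. -/
def xT (m n : ℕ) (i : Fin (m + n)) : List Bool :=
  if (i : ℕ) ≤ n - 2 then
    List.replicate m false ++ [true] ++ List.replicate (i : ℕ) false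
  else List.replicate ((i : ℕ) - (n - 1)) true

/-- Right components of the extended fooling set:
`b^{n-2-j}` for `0 ≤ j ≤ n-2`, and `b^{m-i} a b^{n-2}` for `0 ≤ i ≤ m`. -/
def yT (m n : ℕ) (i : Fin (m + n)) : List Bool :=
  if (i : ℕ) ≤ n - 2 then List.replicate (n - 2 - (i : ℕ)) false
  else List.replicate (m - ((i : ℕ) - (n - 1))) false ++ [true] ++
    List.replicate (n - 2) false

/-! Reading `w`, the NFA of Figure 1 either still counts the prefix (state `|w| ≤ m`) or has
guessed the marked `a` of `w = u a v` and counts the suffix (state `m + 1 + |v|`).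
For the lower bound, every fooling pair splits a word of `L` of the maximal length
`m + n - 1` at its own position, so crossing two pairs yields a word too long for `L`;
an NFA must then pass through pairwise distinct states after the `m + n` prefixes. -/

namespace NFA

variable {α σ : Type*}

theorem append_mem_accepts_iff (M : NFA α σ) {x y : List α} :
    x ++ y ∈ M.accepts ↔ ∃ q ∈ M.eval x, y ∈ M.acceptsFrom {q} := by
  simp only [mem_accepts, evalFrom_append, mem_evalFrom_iff_exists (S := M.evalFrom _ x),
    mem_acceptsFrom, eval]
  tauto

end NFA

namespace Language

variable {α ι : Type*}

/-- Birget's extended fooling set. -/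
def IsExtendedFoolingSet (L : Language α) (x y : ι → List α) : Prop :=
  (∀ i, x i ++ y i ∈ L) ∧ ∀ i j, i ≠ j → x i ++ y j ∉ L ∨ x j ++ y i ∉ L

/-- Of two crossed words, the one taking the longer prefix is longer than any word of `L`. -/
theorem isExtendedFoolingSet_of_length_eq {L : Language α} {x y : ι → List α} {N : ℕ}
    (hL : ∀ w ∈ L, w.length ≤ N) (hmem : ∀ i, x i ++ y i ∈ L)
    (hlen : ∀ i, (x i).length + (y i).length = N)
    (hinj : Function.Injective fun i => (x i).length) :
    L.IsExtendedFoolingSet x y := by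
  refine ⟨hmem, fun i j hij => ?_⟩
  have hne : (x i).length ≠ (x j).length := hinj.ne hij
  have too_long : ∀ k l, (x l).length < (x k).length → x k ++ y l ∉ L := fun k l hlt hkl => by
    have := hL _ hkl
    have := hlen k
    have := hlen l
    simp only [List.length_append] at *
    omega
  rcases lt_or_gt_of_ne hne with h | h
  · exact .inr (too_long j i h)
  · exact .inl (too_long i j h)

end Language

theorem NFA.card_le_of_isExtendedFoolingSet {α σ ι : Type*} [Fintype σ] [Fintype ι]
    (M : NFA α σ) {x y : ι → List α} (hfool : M.accepts.IsExtendedFoolingSet x y) :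
    Fintype.card ι ≤ Fintype.card σ := by
  have hsplit (i : ι) : ∃ q ∈ M.eval (x i), y i ∈ M.acceptsFrom {q} :=
    M.append_mem_accepts_iff.mp (hfool.1 i)
  choose q hqx hqy using hsplit
  refine Fintype.card_le_of_injective q fun i j hij => by_contra fun hne => ?_
  have hcross {k l : ι} (h : q k = q l) : x k ++ y l ∈ M.accepts :=
    M.append_mem_accepts_iff.mpr ⟨q k, hqx k, h ▸ hqy l⟩
  exact (hfool.2 i j hne).elim (· (hcross hij)) (· (hcross hij.symm))

theorem length_le_of_mem_Lmn {m n : ℕ} {w : List Bool} (h : w ∈ Lmn m n) :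
    w.length ≤ m + 1 + (n - 2) := by
  obtain ⟨u, v, rfl, hu, hv⟩ := h
  simp only [List.length_append, List.length_singleton]
  omega

theorem length_xT_add_length_yT (m n : ℕ) (i : Fin (m + n)) :
    (xT m n i).length + (yT m n i).length = m + 1 + (n - 2) := by
  unfold xT yT
  split_ifs <;> simp only [List.length_append, List.length_replicate, List.length_singleton] <;>
    omega

theorem length_xT_injective (m n : ℕ) : Function.Injective fun i => (xT m n i).length := by
  intro i j hij
  simp only [xT] at hij
  split_ifs at hij <;> simp only [List.length_append, List.length_replicate,
    List.length_singleton] at hij <;> omega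

theorem xT_append_yT_mem_Lmn (m n : ℕ) (i : Fin (m + n)) : xT m n i ++ yT m n i ∈ Lmn m n := by
  unfold xT yT
  split_ifs with h
  · exact ⟨List.replicate m false, List.replicate i false ++ List.replicate (n - 2 - i) false,
      by simp only [List.append_assoc], by simp, by simp; omega⟩
  · exact ⟨List.replicate (i - (n - 1)) true ++ List.replicate (m - (i - (n - 1))) false,
      List.replicate (n - 2) false, by simp only [List.append_assoc], by simp; omega, by simp⟩

theorem isExtendedFoolingSet_xT_yT (m n : ℕ) : (Lmn m n).IsExtendedFoolingSet (xT m n) (yT m n) :=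
  Language.isExtendedFoolingSet_of_length_eq (fun _ => length_le_of_mem_Lmn)
    (xT_append_yT_mem_Lmn m n) (length_xT_add_length_yT m n) (length_xT_injective m n)

def Fig1Reach (m n : ℕ) (w : List Bool) (q : ℕ) : Prop :=
  (q = w.length ∧ w.length ≤ m) ∨
    ∃ u v, w = u ++ [true] ++ v ∧ u.length ≤ m ∧ v.length ≤ n - 2 ∧ q = m + 1 + v.length

section Fig1

variable {m n : ℕ}

theorem fig1Reach_append_singleton {w : List Bool} {c : Bool} {p q : Fin (m + n)}
    (hp : Fig1Reach m n w p) (hq : q ∈ (nfaFig1 m n).step p c) :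
    Fig1Reach m n (w ++ [c]) q := by
  simp only [nfaFig1, Set.mem_ofPred_eq] at hq
  rcases hp with ⟨hpw, hwm⟩ | ⟨u, v, rfl, hu, hv, hpv⟩
  · rcases hq with hq | ⟨-, hq, rfl⟩ | ⟨hp, -⟩
    · exact .inl (by simp only [List.length_append, List.length_singleton]; omega)
    · exact .inr ⟨w, [], by simp, by omega, by simp, by simpa using hq⟩
    · omega
  · rcases hq with ⟨hp, -⟩ | ⟨hp, -⟩ | ⟨-, hp, hq⟩
    · omega
    · omega
    · exact .inr ⟨u, v ++ [c], by simp, hu, by simp; omega, by simp; omega⟩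

theorem exists_fig1Reach_of_append_singleton {w : List Bool} {c : Bool}
    {q : Fin (m + n)} (hq : Fig1Reach m n (w ++ [c]) q) :
    ∃ p : Fin (m + n), Fig1Reach m n w p ∧ q ∈ (nfaFig1 m n).step p c := by
  simp only [nfaFig1, Set.mem_ofPred_eq]
  rcases hq with ⟨hq, hwm⟩ | ⟨u, v, hw, hu, hv, hq⟩
  · simp only [List.length_append, List.length_singleton] at hq hwm
    exact ⟨⟨w.length, by omega⟩, .inl ⟨rfl, by omega⟩, .inl ⟨by simp; omega, by simp; omega⟩⟩
  rcases v.eq_nil_or_concat' with rfl | ⟨v, c', rfl⟩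
  · rw [List.append_nil] at hw
    obtain ⟨rfl, hc⟩ := List.append_inj' hw rfl
    refine ⟨⟨w.length, by omega⟩, .inl ⟨rfl, hu⟩, .inr (.inl ⟨hu, by simpa using hq, ?_⟩)⟩
    simpa using hc.symm
  · rw [← List.append_assoc] at hw
    obtain ⟨rfl, hc⟩ := List.append_inj' hw rfl
    simp only [List.cons.injEq, and_true] at hc
    subst hc
    simp only [List.length_append, List.length_singleton] at hv hq
    exact ⟨⟨m + 1 + v.length, by omega⟩, .inr ⟨u, v, rfl, hu, by omega, rfl⟩,
      .inr (.inr ⟨by simp, by simp; omega, by simp; omega⟩)⟩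

theorem mem_eval_nfaFig1_iff (w : List Bool) (q : Fin (m + n)) :
    q ∈ (nfaFig1 m n).eval w ↔ Fig1Reach m n w q := by
  induction w using List.reverseRecOn generalizing q with
  | nil =>
    simp [nfaFig1, Fig1Reach]
  | append_singleton w c ih =>
    simp only [NFA.eval_append_singleton, NFA.mem_stepSet, ih]
    exact ⟨fun ⟨p, hp, hq⟩ => fig1Reach_append_singleton hp hq,
      exists_fig1Reach_of_append_singleton⟩

theorem nfaFig1_accepts (hn : 2 ≤ n) : (nfaFig1 m n).accepts = Lmn m n := by
  ext w
  change (∃ q ∈ (nfaFig1 m n).accept, q ∈ (nfaFig1 m n).eval w) ↔ w ∈ Lmn m n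
  simp only [mem_eval_nfaFig1_iff]
  simp only [Fig1Reach, nfaFig1, Set.mem_ofPred_eq]
  constructor
  · rintro ⟨q, hq, ⟨hqw, hw⟩ | ⟨u, v, rfl, hu, -, hqv⟩⟩
    · omega
    · exact ⟨u, v, rfl, hu, by omega⟩
  · rintro ⟨u, v, rfl, hu, hv⟩
    exact ⟨⟨m + n - 1, by omega⟩, rfl, .inr ⟨u, v, rfl, hu, hv.le, by simp; omega⟩⟩

end Fig1

theorem minimal_nfa_Lmn_general (m n : ℕ) (hn : 2 ≤ n) :
    (nfaFig1 m n).accepts = Lmn m n ∧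
    (∀ i : Fin (m + n), xT m n i ++ yT m n i ∈ Lmn m n) ∧
    (∀ i j : Fin (m + n), i ≠ j →
      xT m n i ++ yT m n j ∉ Lmn m n ∨ xT m n j ++ yT m n i ∉ Lmn m n) ∧
    (∀ (σ : Type) [Fintype σ] (B : NFA Bool σ),
      B.accepts = Lmn m n → m + n ≤ Fintype.card σ) := by
  have hfool := isExtendedFoolingSet_xT_yT m n
  refine ⟨nfaFig1_accepts hn, hfool.1, hfool.2, fun σ _ B hB => ?_⟩
  rw [← hB] at hfool
  simpa using B.card_le_of_isExtendedFoolingSet hfool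

/-- the minimal NFA for `L = {a,b}^{≤m} a {a,b}^{n-2}` has exactly
`m+n` states: the `(m+n)`-state NFA of Figure 1 accepts `L`, the set
`S = {(b^m a b^j, b^{n-2-j}) : 0 ≤ j ≤ n-2} ∪ {(a^i, b^{m-i} a b^{n-2}) : 0 ≤ i ≤ m}`
is an extended fooling set for `L`, and consequently every NFA accepting exactly
`L` has at least `m+n` states. -/
theorem minimal_nfa_Lmn (m n : ℕ) (hm : 1 ≤ m) (hn : 2 ≤ n) :
    (nfaFig1 m n).accepts = Lmn m n ∧
    (∀ i : Fin (m + n), xT m n i ++ yT m n i ∈ Lmn m n) ∧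
    (∀ i j : Fin (m + n), i ≠ j →
      xT m n i ++ yT m n j ∉ Lmn m n ∨ xT m n j ++ yT m n i ∉ Lmn m n) ∧
    (∀ (σ : Type) [Fintype σ] (B : NFA Bool σ),
      B.accepts = Lmn m n → m + n ≤ Fintype.card σ) :=
  minimal_nfa_Lmn_general m n hn
end
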